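/- Let R be an integral domain and let g ∈ R be nonzero and not a unit. Then for every natural number m, the monomial X^{m+1} does not belong to the R-submodule R[X]_{≤m} + T_g(R[X]) of R[X]. In particular T_g : R[X] → R[X] is not surjective, and for every m the natural map R[X]_{≤m}/T_g(R[X]_{≤m}) → R[X]_{≤m+1}/T_g(R[X]_{≤m+1}) is not surjective, so the increasing system of cokernels (Coker(T_g|_{R[X]_{≤m}}))_m is not stationary. (In the paper, with R the local ring of holomorphic germs at s₀ and g(s₀) = 0, this shows that H^0(Di_Y^*(M)) is not coherent in any neighbourhood of s₀.) -/

import Mathlib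

open Polynomial

/-- The `R`-linear map `T_g : R[X] → R[X]`, `T_g(p) = g•p + X·p''`, describing the right
action of the relative differential operator `P = x²∂_x + g(s)` on
`B^{(r)}_{{0}×S/S} = D_{X×S/S}/xD_{X×S/S} ≅ O_S[δ(x)]`, with `X^j` corresponding to
`δ^j(x)`. Equivalently `T_g(Σ_j a_j X^j) = Σ_j (j(j+1)·a_{j+1} + g·a_j)·X^j`. -/
noncomputable def Tg {R : Type*} [CommRing R] (g : R) : R[X] →ₗ[R] R[X] :=
  g • LinearMap.id +
    (LinearMap.mulLeft R (X : R[X])) ∘ₗ (Polynomial.derivative ∘ₗ Polynomial.derivative)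

/-! The term `X·p''` of `T_g(p)` has lower degree than `p`, so over a domain with `g ≠ 0`
the leading coefficient of `T_g(p)` is `g` times that of `p`. Hence `T_g(p)` is monic only
if `g` is a unit, while `X^(m+1) = q + T_g(p)` with `deg q ≤ m` would make `T_g(p)` monic. -/

section Tg

variable {R : Type*} [CommRing R] (g : R) (p : R[X])

lemma coeff_Tg (n : ℕ) :
    (Tg g p).coeff n = (n * (n + 1) : ℕ) * p.coeff (n + 1) + g * p.coeff n := by
  have h : Tg g p = g • p + X * derivative (derivative p) := rfl
  rw [h, coeff_add, coeff_smul, smul_eq_mul]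
  cases n with
  | zero => simp
  | succ k =>
    rw [coeff_X_mul, coeff_derivative, coeff_derivative]
    push_cast
    ring

lemma natDegree_Tg_le : (Tg g p).natDegree ≤ p.natDegree := by
  refine natDegree_le_iff_coeff_eq_zero.mpr fun n hn => ?_
  rw [coeff_Tg, coeff_eq_zero_of_natDegree_lt hn,
    coeff_eq_zero_of_natDegree_lt (hn.trans (Nat.lt_succ_self n)), mul_zero, mul_zero, add_zero]

lemma coeff_Tg_natDegree : (Tg g p).coeff p.natDegree = g * p.leadingCoeff := by
  rw [coeff_Tg, coeff_eq_zero_of_natDegree_lt (Nat.lt_succ_self _), mul_zero, zero_add,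
    leadingCoeff]

lemma leadingCoeff_Tg [NoZeroDivisors R] {g : R} (hg : g ≠ 0) :
    (Tg g p).leadingCoeff = g * p.leadingCoeff := by
  rcases eq_or_ne p 0 with rfl | hp
  · simp
  have hcoeff : (Tg g p).coeff p.natDegree ≠ 0 := by
    rw [coeff_Tg_natDegree]
    exact mul_ne_zero hg (leadingCoeff_ne_zero.mpr hp)
  rw [leadingCoeff, natDegree_eq_of_le_of_coeff_ne_zero (natDegree_Tg_le g p) hcoeff,
    coeff_Tg_natDegree]

lemma isUnit_of_monic_Tg [NoZeroDivisors R] {g : R} (hg : g ≠ 0) (h : (Tg g p).Monic) :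
    IsUnit g :=
  IsUnit.of_mul_eq_one p.leadingCoeff (leadingCoeff_Tg p hg ▸ h)

lemma X_pow_succ_notMem_degreeLE_sup_range_Tg [IsDomain R] {g : R} (hg : g ≠ 0)
    (hgu : ¬IsUnit g) (m : ℕ) :
    (X : R[X]) ^ (m + 1) ∉ degreeLE R (m : WithBot ℕ) ⊔ LinearMap.range (Tg g) := by
  rw [Submodule.mem_sup]
  rintro ⟨q, hq, _, ⟨p, rfl⟩, hsum⟩
  have hmonic : (Tg g p).Monic := by
    rw [eq_sub_of_add_eq' hsum]
    refine (monic_X_pow _).sub_of_left ?_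
    rw [degree_X_pow]
    exact (mem_degreeLE.mp hq).trans_lt (by exact_mod_cast Nat.lt_succ_self m)
  exact hgu (isUnit_of_monic_Tg p hg hmonic)

end Tg

/-- If `R` is an integral domain and `g` is nonzero and not a unit, then for every `m`
the monomial `X^(m+1)` does not lie in the submodule `R[X]_{≤m} + T_g(R[X])`.  In
particular `T_g` is not surjective, and for every `m` the natural map
`R[X]_{≤m}/T_g(R[X]_{≤m}) → R[X]_{≤m+1}/T_g(R[X]_{≤m+1})` is not surjective (indeed the
class of `X^(m+1)` is not in its image), so the increasing system of cokernels of the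
restrictions `T_g|_{R[X]_{≤m}}` is not stationary. -/
theorem X_pow_not_mem_of_not_isUnit {R : Type*} [CommRing R] [IsDomain R] (g : R)
    (hg : g ≠ 0) (hgu : ¬IsUnit g) :
    (∀ m : ℕ, (X : R[X]) ^ (m + 1) ∉
      Polynomial.degreeLE R (m : WithBot ℕ) ⊔ LinearMap.range (Tg g)) ∧
    ¬Function.Surjective (Tg g) ∧
    (∀ m : ℕ, (X : R[X]) ^ (m + 1) ∉
      Polynomial.degreeLE R (m : WithBot ℕ) ⊔
        Submodule.map (Tg g) (Polynomial.degreeLE R ((m + 1 : ℕ) : WithBot ℕ))) := by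
  have key := X_pow_succ_notMem_degreeLE_sup_range_Tg hg hgu (R := R)
  refine ⟨key, fun hsurj => key 0 ?_, fun m => ?_⟩
  · rw [LinearMap.range_eq_top.mpr hsurj, sup_top_eq]
    exact Submodule.mem_top
  · exact fun hmem => key m (sup_le_sup_left (LinearMap.map_le_range (f := Tg g)) _ hmem)
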